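/- Fix r ≥ 1 and let H be a C_{2r+1}-free graph with a vertex v such that every vertex of H is within distance r of v. Then for each 0 ≤ s ≤ r, the subgraph of H induced on the set of vertices at distance exactly s from v is (2r−1)-degenerate, and hence 2r-colorable. -/

import Mathlib

/-- `H` contains no cycle of length `n`. -/
def CFree {V : Type*} (H : SimpleGraph V) (n : ℕ) : Prop :=
  ∀ (v : V) (c : H.Walk v v), c.IsCycle → c.length ≠ n

/-- A graph is `k`-degenerate if every nonempty (finite) subgraph has a vertex
of degree at most `k`. -/
def Degenerate {V : Type*} (G : SimpleGraph V) (k : ℕ) : Prop :=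
  ∀ s : Set V, s.Nonempty → s.Finite → ∃ v ∈ s, (G.neighborSet v ∩ s).ncard ≤ k

/-!
Let `1 ≤ s ≤ r` and let `A` be a finite set on the sphere of radius `s` about `u` in which every
vertex has at least `2r` neighbours. Fix a breadth-first search tree rooted at `u`, let `c z` be
the ancestor of `z` at depth `1`, and put `L = 2r + 1 - 2s`, which is odd. A path of length `L`
inside `A` between `a` and `b` with `c a ≠ c b` closes up through the tree paths from `a` and `b`
down to `u` into a cycle of length `L + 2s = 2r + 1`. So `c` agrees at the ends of every such path,
and because `L` is odd and degrees in `A` exceed `L`, this forces `c` to agree along every edge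
of `A`: on a maximal path ending at `w`, two neighbours of `w` whose positions are congruent
modulo `L` close a cycle of length `≡ 2 (mod L)`, hence coprime to `L`, so steps of length `L`
reach every vertex of that cycle, and then of the whole path. A class of `c` inside `A` therefore
keeps all degrees `≥ 2r` and lies on the sphere of radius `s - 1` about a neighbour of `u`;
descending to `s = 0`, where the sphere is a single vertex, gives a contradiction. Finally, a
`k`-degenerate graph is `(k + 1)`-coloured greedily on finite sets, hence everywhere by compactness.
-/

open Set Function

theorem Function.Periodic.one_of_coprime {α : Type*} {g : ℕ → α} {L M : ℕ}
    (hL : Periodic g L) (hM : Periodic g M) (hLM : L.Coprime M) : Periodic g 1 := by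
  rcases Nat.eq_zero_or_pos M with rfl | hM0
  · rwa [(Nat.coprime_zero_right L).1 hLM] at hL
  obtain ⟨e, -, he⟩ := Nat.exists_mul_mod_eq_of_coprime 1 hLM hM0.ne'
  intro t
  rw [← hM.map_mod_nat, ← hL.nat_mul e t, ← hM.map_mod_nat (t + _)]
  congr 1
  exact Nat.ModEq.add_left t (by rw [mul_comm] at he; exact he.symm)

theorem apply_eq_of_forall_apply_add_eq {α : Type*} {g : ℕ → α} {L m i : ℕ} (hL : 0 < L)
    (hstep : ∀ k, k + L ≤ m → g (k + L) = g k) (hwin : ∀ k < L, g (i + k) = g i)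
    (him : i + L ≤ m) : ∀ k ≤ m, g k = g i := by
  have up : ∀ k, i ≤ k → k ≤ m → g k = g i := by
    intro k
    induction k using Nat.strong_induction_on with
    | _ k ih =>
      intro hik hkm
      by_cases hk : k < i + L
      · simpa [Nat.add_sub_cancel' hik] using hwin (k - i) (by omega)
      · rw [← Nat.sub_add_cancel (show L ≤ k by omega), hstep _ (by omega)]
        exact ih _ (by omega) (by omega) (by omega)
  have down : ∀ d k, i ≤ k + d → k ≤ m → g k = g i := by
    intro d
    induction d using Nat.strong_induction_on with
    | _ d ih =>
      intro k hkd hkm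
      by_cases hik : i ≤ k
      · exact up k hik hkm
      · rw [← hstep k (by omega)]
        exact ih (d - L) (by omega) (k + L) (by omega) (by omega)
  exact fun k hk => down i k (by omega) hk

namespace SimpleGraph

variable {V : Type*} {G : SimpleGraph V}

/-- Paths and cycles are handled as vertex sequences rather than walks, so that subpaths are the
shifts `fun k => f (t + k)`; a cycle of length `n` is an `n`-periodic sequence. -/
structure IsPathSeq (G : SimpleGraph V) (f : ℕ → V) (n : ℕ) : Prop where
  adj : ∀ k < n, G.Adj (f k) (f (k + 1))
  injOn : InjOn f (Iic n)

structure IsCycleSeq (G : SimpleGraph V) (g : ℕ → V) (n : ℕ) : Prop where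
  periodic : Periodic g n
  adj : ∀ t, G.Adj (g t) (g (t + 1))
  injOn : InjOn g (Iio n)

theorem Walk.IsPath.isPathSeq {u v : V} {p : G.Walk u v} (hp : p.IsPath) :
    G.IsPathSeq p.getVert p.length :=
  ⟨fun _ hk => p.adj_getVert_succ hk, hp.getVert_injOn⟩

namespace IsPathSeq

variable {f g : ℕ → V} {m n : ℕ}

theorem shift (hf : G.IsPathSeq f n) (t : ℕ) (h : t + m ≤ n) :
    G.IsPathSeq (fun k => f (t + k)) m where
  adj k hk := hf.adj (t + k) (by omega)
  injOn a ha b hb hab := by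
    simp only [mem_Iic] at ha hb
    have := hf.injOn (show t + a ∈ Iic n by simp; omega) (show t + b ∈ Iic n by simp; omega) hab
    omega

theorem mono (hf : G.IsPathSeq f n) (h : m ≤ n) : G.IsPathSeq f m :=
  ⟨fun k hk => hf.adj k (by omega), hf.injOn.mono (Iic_subset_Iic.2 h)⟩

theorem reverse (hf : G.IsPathSeq f n) : G.IsPathSeq (fun k => f (n - k)) n where
  adj k hk := by
    simpa [show n - (k + 1) + 1 = n - k by omega] using (hf.adj (n - (k + 1)) (by omega)).symm
  injOn a ha b hb hab := by
    simp only [mem_Iic] at ha hb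
    have := hf.injOn (show n - a ∈ Iic n by simp) (show n - b ∈ Iic n by simp) hab
    omega

theorem append (hf : G.IsPathSeq f m) (hg : G.IsPathSeq g n) (hfg : f m = g 0)
    (hdisj : ∀ i ≤ m, ∀ j ≤ n, 0 < j → f i ≠ g j) :
    G.IsPathSeq (fun k => if k ≤ m then f k else g (k - m)) (m + n) where
  adj k hk := by
    rcases lt_trichotomy k m with h | rfl | h
    · simpa [h.le, show k + 1 ≤ m by omega] using hf.adj k h
    · simpa [hfg] using hg.adj 0 (by omega)
    · simpa [show ¬k ≤ m by omega, show ¬k + 1 ≤ m by omega,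
        show k + 1 - m = k - m + 1 by omega] using hg.adj (k - m) (by omega)
  injOn a ha b hb hab := by
    simp only [mem_Iic] at ha hb
    dsimp only at hab
    split_ifs at hab with h₁ h₂ h₂
    · exact hf.injOn h₁ h₂ hab
    · exact absurd hab (hdisj a h₁ (b - m) (by omega) (by omega))
    · exact absurd hab.symm (hdisj b h₂ (a - m) (by omega) (by omega))
    · have := hg.injOn (show a - m ∈ Iic n by simp; omega)
        (show b - m ∈ Iic n by simp; omega) hab
      omega

theorem snoc (hf : G.IsPathSeq f n) {v : V} (hadj : G.Adj (f n) v) (hv : ∀ k ≤ n, f k ≠ v) :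
    G.IsPathSeq (fun k => if k ≤ n then f k else v) (n + 1) where
  adj k hk := by
    rcases Nat.lt_or_eq_of_le (Nat.lt_succ_iff.1 hk) with h | rfl
    · simpa [h.le, show k + 1 ≤ n by omega] using hf.adj k h
    · simpa using hadj
  injOn a ha b hb hab := by
    simp only [mem_Iic] at ha hb
    dsimp only at hab
    split_ifs at hab with h₁ h₂ h₂
    · exact hf.injOn h₁ h₂ hab
    · exact absurd hab (hv a h₁)
    · exact absurd hab.symm (hv b h₂)
    · omega

theorem map {W : Type*} {G' : SimpleGraph W} (hf : G.IsPathSeq f n) (φ : G ↪g G') :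
    G'.IsPathSeq (φ ∘ f) n :=
  ⟨fun k hk => φ.map_adj_iff.2 (hf.adj k hk), φ.injective.comp_injOn hf.injOn⟩

theorem isCycleSeq (hf : G.IsPathSeq f n) (hclose : G.Adj (f n) (f 0)) :
    G.IsCycleSeq (fun t => f (t % (n + 1))) (n + 1) where
  periodic t := by simp only [Nat.add_mod_right]
  adj t := by
    have hn : 0 < n := Nat.pos_of_ne_zero fun h => by subst h; exact G.irrefl hclose
    have ht : t % (n + 1) < n + 1 := Nat.mod_lt t n.succ_pos
    rw [Nat.add_mod_eq_ite, Nat.mod_eq_of_lt (show 1 < n + 1 by omega)]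
    split_ifs with h
    · rw [show t % (n + 1) = n by omega, show n + 1 - (n + 1) = 0 by omega]
      exact hclose
    · exact hf.adj _ (by omega)
  injOn a ha b hb hab := by
    simp only [mem_Iio] at ha hb
    dsimp only at hab
    rw [Nat.mod_eq_of_lt ha, Nat.mod_eq_of_lt hb] at hab
    exact hf.injOn (show a ∈ Iic n by simp; omega) (show b ∈ Iic n by simp; omega) hab

end IsPathSeq

namespace IsCycleSeq

variable {g : ℕ → V} {n : ℕ}

theorem isPathSeq (hg : G.IsCycleSeq g n) (t : ℕ) {m : ℕ} (hm : m < n) :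
    G.IsPathSeq (fun k => g (t + k)) m where
  adj k _ := hg.adj (t + k)
  injOn a ha b hb hab := by
    simp only [mem_Iic] at ha hb
    simp only [← hg.periodic.map_mod_nat (t + a), ← hg.periodic.map_mod_nat (t + b)] at hab
    have := hg.injOn (mem_Iio.2 (Nat.mod_lt _ (by omega))) (mem_Iio.2 (Nat.mod_lt _ (by omega))) hab
    exact (Nat.ModEq.add_left_cancel' t this).eq_of_lt_of_lt (by omega) (by omega)

theorem exists_isCycle (hg : G.IsCycleSeq g n) (hn : 3 ≤ n) :
    ∃ (v : V) (c : G.Walk v v), c.IsCycle ∧ c.length = n := by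
  obtain ⟨n, rfl⟩ : ∃ n', n = n' + 2 := ⟨n - 2, by omega⟩
  have hsucc : ∀ i : Fin (n + 2), G.Adj (g i) (g ↑(i + 1)) := fun i => by
    rw [Fin.val_add, Fin.val_one, hg.periodic.map_mod_nat]
    exact hg.adj i
  refine (cycleGraph_isContained_iff hn).1 ⟨⟨⟨fun i => g i, fun {i j} hij => ?_⟩,
    fun i j h => Fin.ext (hg.injOn i.2 j.2 h)⟩⟩
  rcases cycleGraph_adj.1 hij with h | h
  · rw [sub_eq_iff_eq_add'] at h
    exact h ▸ (hsucc j).symm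
  · rw [sub_eq_iff_eq_add'] at h
    exact h ▸ hsucc i

end IsCycleSeq

theorem Walk.IsPath.exists_extend_forall_adj_mem_support [Finite V] {v x : V} {p : G.Walk v x}
    (hp : p.IsPath) : ∃ (w : V) (q : G.Walk w x),
      q.IsPath ∧ p.support ⊆ q.support ∧ ∀ t, G.Adj w t → t ∈ q.support := by
  have := Fintype.ofFinite V
  induction h : Fintype.card V - p.length generalizing v p with
  | zero => exact absurd hp.length_lt (by omega)
  | succ d ih =>
    by_cases! hmax : ∀ t, G.Adj v t → t ∈ p.support
    · exact ⟨v, p, hp, List.Subset.refl _, hmax⟩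
    obtain ⟨t, hvt, ht⟩ := hmax
    obtain ⟨w, q, hq, hsub, hw⟩ := ih (hp.cons ht (h := hvt.symm)) (by simp; omega)
    exact ⟨w, q, hq, fun z hz => hsub (by simp [hz]), hw⟩

theorem Walk.exists_adj_getVert_modEq {x w : V} {p : G.Walk x w} {L : ℕ} (hL0 : 0 < L)
    (hw : ∀ t, G.Adj w t → t ∈ p.support) (hL : L < (G.neighborSet w).ncard) :
    ∃ i j, i < j ∧ j ≤ p.length ∧ i ≡ j [MOD L] ∧
      G.Adj w (p.getVert i) ∧ G.Adj w (p.getVert j) := by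
  classical
  set S := (Finset.range (p.length + 1)).filter (fun k => G.Adj w (p.getVert k))
  have hN : G.neighborSet w ⊆ ↑(S.image p.getVert) := fun t ht => by
    obtain ⟨k, rfl, hk⟩ := Walk.mem_support_iff_exists_getVert.1 (hw t ht)
    simp only [S, Finset.coe_image, Finset.coe_filter, Finset.mem_range]
    exact ⟨k, ⟨by omega, ht⟩, rfl⟩
  have hS : (Finset.range L).card < S.card := by
    calc (Finset.range L).card = L := Finset.card_range L
      _ < (G.neighborSet w).ncard := hL
      _ ≤ (S.image p.getVert).card := by
        rw [← Set.ncard_coe_finset]; exact Set.ncard_le_ncard hN (Finset.finite_toSet _)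
      _ ≤ S.card := Finset.card_image_le
  obtain ⟨a, ha, b, hb, hab, hmod⟩ := Finset.exists_ne_map_eq_of_card_lt_of_maps_to hS
    (f := (· % L)) fun k _ => Finset.mem_range.2 (Nat.mod_lt _ hL0)
  simp only [S, Finset.mem_filter, Finset.mem_range] at ha hb
  rcases lt_or_gt_of_ne hab with h | h
  · exact ⟨a, b, h, by omega, hmod, ha.2, hb.2⟩
  · exact ⟨b, a, h, by omega, hmod.symm, hb.2, ha.2⟩

theorem apply_eq_apply_of_adj_of_forall_isPathSeq [Finite V] {α : Type*} {L : ℕ} (hL : Odd L)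
    (hdeg : ∀ v, L < (G.neighborSet v).ncard) (c : V → α)
    (hc : ∀ f, G.IsPathSeq f L → c (f 0) = c (f L)) {x y : V} (hxy : G.Adj x y) :
    c x = c y := by
  have hL0 : 0 < L := hL.pos
  obtain ⟨w, q, hq, hsub, hw⟩ := (Walk.IsPath.nil.cons (by simpa using hxy.ne.symm)
    (h := hxy.symm)).exists_extend_forall_adj_mem_support
  set p := q.reverse
  have hp : p.IsPath := hq.reverse
  obtain ⟨i, j, hij, hjm, hmod, hwi, hwj⟩ :=
    p.exists_adj_getVert_modEq hL0 (by simpa [p] using hw) (hdeg w)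
  have hjm' : j < p.length := lt_of_le_of_ne hjm fun h => by
    rw [h, p.getVert_length] at hwj; exact G.irrefl hwj
  have hdvd := (Nat.modEq_iff_dvd' hij.le).1 hmod
  have hLji : L ≤ j - i := Nat.le_of_dvd (by omega) hdvd
  obtain ⟨g, hg, hgp⟩ : ∃ g, G.IsCycleSeq g (j - i + 1 + 1) ∧
      ∀ k ≤ j - i, g k = p.getVert (i + k) := by
    refine ⟨_, ((hp.isPathSeq.shift i (m := j - i) (by omega)).snoc (v := w)
      (by simpa [Nat.add_sub_cancel' hij.le] using hwj.symm) fun k hk h => ?_).isCycleSeq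
      (by simpa using hwi),
      fun k hk => by simp [Nat.mod_eq_of_lt (show k < j - i + 1 + 1 by omega), hk]⟩
    have := hp.getVert_injOn (show i + k ∈ {n | n ≤ p.length} by simp; omega)
      (show p.length ∈ {n | n ≤ p.length} by simp) (h.trans p.getVert_length.symm)
    omega
  have hcop : L.Coprime (j - i + 1 + 1) := by
    obtain ⟨d, hd⟩ := hdvd
    rw [show j - i + 1 + 1 = 2 + d * L by rw [hd]; ring, Nat.coprime_add_mul_right_right]
    exact Nat.coprime_two_right.2 hL
  have hconst : Periodic (c ∘ g) 1 := Periodic.one_of_coprime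
    (fun t => (hc _ (hg.isPathSeq t (by omega))).symm) (hg.periodic.comp c) hcop
  have hwin : ∀ k < L, c (p.getVert (i + k)) = c (p.getVert i) := fun k hk => by
    have := hconst.nat_mul_eq k
    simp only [comp_apply, mul_one, Nat.cast_id] at this
    rwa [hgp k (by omega), hgp 0 (by omega)] at this
  have hall := apply_eq_of_forall_apply_add_eq (g := c ∘ p.getVert) hL0
    (fun k hk => (hc _ (hp.isPathSeq.shift k hk)).symm) hwin (by omega)
  obtain ⟨k, rfl, hk⟩ := Walk.mem_support_iff_exists_getVert.1
    (show y ∈ p.support by simpa [p] using hsub (by simp))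
  simpa using (hall 0 (by omega)).trans (hall k hk).symm

theorem ncard_neighborSet_induce_inter {A : Set V} (v : A) (S : Set A) :
    ((G.induce A).neighborSet v ∩ S).ncard = (G.neighborSet v ∩ Subtype.val '' S).ncard := by
  rw [← Set.ncard_image_of_injective _ Subtype.val_injective]
  congr 1
  ext t
  constructor
  · rintro ⟨t', ⟨h₁, h₂⟩, rfl⟩
    exact ⟨h₁, t', h₂, rfl⟩
  · rintro ⟨h₁, t', h₂, rfl⟩
    exact ⟨t', ⟨h₁, h₂⟩, rfl⟩

theorem exists_adj_dist_add_one_eq {u x : V} (hx : G.dist u x ≠ 0) :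
    ∃ y, G.Adj y x ∧ G.dist u y + 1 = G.dist u x := by
  obtain ⟨p, hp⟩ := exists_walk_of_dist_ne_zero hx
  have hnil : ¬p.Nil := fun h => hx (by rw [← hp, Walk.length_eq_zero_iff.2 h])
  refine ⟨p.penultimate, p.adj_penultimate hnil, le_antisymm ?_ ?_⟩
  · have := G.dist_le p.dropLast
    rw [Walk.length_dropLast] at this
    have := p.not_nil_iff_lt_length.1 hnil
    omega
  · have hadj := p.adj_penultimate hnil
    simpa [dist_eq_one_iff_adj.2 hadj] using hadj.reachable.dist_triangle_right u

open Classical in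
noncomputable def bfsParent (G : SimpleGraph V) (u x : V) : V :=
  if h : ∃ y, G.Adj y x ∧ G.dist u y + 1 = G.dist u x then h.choose else x

section bfsParent

variable {u : V}

theorem bfsParent_spec {x : V} (hx : G.dist u x ≠ 0) :
    G.Adj (G.bfsParent u x) x ∧ G.dist u (G.bfsParent u x) + 1 = G.dist u x := by
  have h := exists_adj_dist_add_one_eq hx
  rw [bfsParent, dif_pos h]
  exact h.choose_spec

theorem dist_iterate_bfsParent (x : V) {k : ℕ} (hk : k ≤ G.dist u x) :
    G.dist u ((G.bfsParent u)^[k] x) = G.dist u x - k := by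
  induction k with
  | zero => rfl
  | succ k ih =>
    have h := (bfsParent_spec (G := G) (u := u) (x := (G.bfsParent u)^[k] x)
      (by rw [ih (by omega)]; omega)).2
    rw [ih (by omega)] at h
    rw [iterate_succ_apply']
    omega

theorem isPathSeq_iterate_bfsParent (x : V) :
    G.IsPathSeq (fun k => (G.bfsParent u)^[k] x) (G.dist u x) where
  adj k hk := by
    rw [iterate_succ_apply']
    exact (bfsParent_spec (by rw [dist_iterate_bfsParent x hk.le]; omega)).1.symm
  injOn a ha b hb hab := by
    have := congrArg (G.dist u) hab
    simp only [dist_iterate_bfsParent x ha, dist_iterate_bfsParent x hb] at this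
    simp only [mem_Iic] at ha hb
    omega

theorem iterate_bfsParent_dist (hG : G.Connected) (x : V) :
    (G.bfsParent u)^[G.dist u x] x = u :=
  ((hG.preconnected u _).dist_eq_zero_iff.1 (by rw [dist_iterate_bfsParent x le_rfl,
    Nat.sub_self])).symm

theorem dist_iterate_bfsParent_le (x : V) {k : ℕ} (hk : k ≤ G.dist u x) :
    G.dist ((G.bfsParent u)^[k] x) x ≤ k := by
  induction k with
  | zero => simp
  | succ k ih =>
    have hadj := (isPathSeq_iterate_bfsParent (G := G) (u := u) x).adj k hk
    have := hadj.symm.reachable.dist_triangle_left x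
    rw [dist_eq_one_iff_adj.2 hadj.symm] at this
    have := ih (by omega)
    omega

theorem isPathSeq_bfsParent_tree (hG : G.Connected) {a b : V} {s : ℕ}
    (ha : G.dist u a = s + 1) (hb : G.dist u b = s + 1)
    (hab : (G.bfsParent u)^[s] a ≠ (G.bfsParent u)^[s] b) :
    G.IsPathSeq (fun k => if k ≤ s + 1 then (G.bfsParent u)^[k] b
      else (G.bfsParent u)^[s + 1 - (k - (s + 1))] a) (s + 1 + (s + 1)) := by
  have hpa := isPathSeq_iterate_bfsParent (G := G) (u := u) a
  have hpb := isPathSeq_iterate_bfsParent (G := G) (u := u) b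
  rw [ha] at hpa
  rw [hb] at hpb
  refine hpb.append hpa.reverse ?_ fun i hi j hj hj0 h => hab ?_
  · have h₁ := iterate_bfsParent_dist (u := u) hG b
    have h₂ := iterate_bfsParent_dist (u := u) hG a
    rw [hb] at h₁
    rw [ha] at h₂
    rw [Nat.sub_zero, h₁, h₂]
  have hd := congrArg (G.dist u) h
  rw [dist_iterate_bfsParent b (by omega), dist_iterate_bfsParent a (by omega)] at hd
  obtain rfl : s + 1 - j = i := by omega
  rw [← Nat.sub_add_cancel (show s + 1 - j ≤ s by omega), iterate_add_apply, iterate_add_apply,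
    h]

theorem exists_isCycle_of_iterate_bfsParent_ne (hG : G.Connected) {f : ℕ → V} {L s : ℕ}
    (hf : G.IsPathSeq f L) (hfu : ∀ k ≤ L, G.dist u (f k) = s + 1)
    (hne : (G.bfsParent u)^[s] (f 0) ≠ (G.bfsParent u)^[s] (f L)) :
    ∃ (v : V) (c : G.Walk v v), c.IsCycle ∧ c.length = L + 2 * (s + 1) := by
  have hL : L ≠ 0 := by rintro rfl; exact hne rfl
  have ha := hfu 0 (Nat.zero_le L)
  have hb := hfu L le_rfl
  have hT := isPathSeq_bfsParent_tree hG ha hb hne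
  set T := fun k => if k ≤ s + 1 then (G.bfsParent u)^[k] (f L)
      else (G.bfsParent u)^[s + 1 - (k - (s + 1))] (f 0) with hTdef
  have hTu : ∀ j ≤ 2 * s + 1, 0 < j → G.dist u (T j) ≤ s := fun j hj hj0 => by
    by_cases h : j ≤ s + 1
    · simp only [hTdef, if_pos h]
      rw [dist_iterate_bfsParent _ (by omega), hb]
      omega
    · simp only [hTdef, if_neg h]
      rw [dist_iterate_bfsParent _ (by omega), ha]
      omega
  have hF := hf.append (hT.mono (m := 2 * s + 1) (by omega)) (by simp [hTdef])
    fun i hi j hj hj0 h => by have := hTu j hj hj0; rw [← h, hfu i hi] at this; omega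
  have hclose : G.Adj (T (2 * s + 1)) (f 0) := by
    have := hT.adj (2 * s + 1) (by omega)
    rwa [show T (2 * s + 1 + 1) = f 0 by
      simp only [hTdef, if_neg (show ¬2 * s + 1 + 1 ≤ s + 1 by omega),
        show s + 1 - (2 * s + 1 + 1 - (s + 1)) = 0 by omega, iterate_zero_apply]]
      at this
  obtain ⟨v, c, hc, hlen⟩ := (hF.isCycleSeq (by simpa using hclose)).exists_isCycle (by omega)
  exact ⟨v, c, hc, by omega⟩

end bfsParent

end SimpleGraph

open SimpleGraph

theorem CFree.iterate_bfsParent_eq_of_adj {V : Type*} {H : SimpleGraph V} {r s : ℕ}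
    (hH : CFree H (2 * r + 1)) (hG : H.Connected) (hs : s + 1 ≤ r) {u : V} {A : Set V}
    (hA : A.Finite) (hAu : ∀ a ∈ A, H.dist u a = s + 1)
    (hdeg : ∀ a ∈ A, 2 * r ≤ (H.neighborSet a ∩ A).ncard) {x y : V} (hx : x ∈ A)
    (hy : y ∈ A) (hxy : H.Adj x y) : (H.bfsParent u)^[s] x = (H.bfsParent u)^[s] y := by
  obtain ⟨L, hL⟩ : ∃ L, L + 2 * (s + 1) = 2 * r + 1 := ⟨2 * r - 2 * s - 1, by omega⟩
  have := hA.to_subtype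
  refine apply_eq_apply_of_adj_of_forall_isPathSeq (G := H.induce A) (L := L)
    (x := ⟨x, hx⟩) (y := ⟨y, hy⟩) ⟨r - s - 1, by omega⟩ (fun z => ?_) (_ ∘ Subtype.val)
    (fun f hf => ?_) hxy
  · rw [← inter_univ ((H.induce A).neighborSet z), ncard_neighborSet_induce_inter, image_univ,
      Subtype.range_coe]
    exact (show L < 2 * r by omega).trans_le (hdeg z z.2)
  · by_contra hne
    obtain ⟨v, C, hC, hlen⟩ := exists_isCycle_of_iterate_bfsParent_ne hG
      (hf.map (Embedding.induce A)) (fun k _ => hAu _ (f k).2) hne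
    exact hH v C hC (by omega)

theorem CFree.exists_mem_ncard_neighborSet_inter_lt {V : Type*} {H : SimpleGraph V} {r : ℕ}
    (hH : CFree H (2 * r + 1)) (hG : H.Connected) (hr : 0 < r) {s : ℕ} (hs : s ≤ r) {u : V}
    {A : Set V} (hA : A.Finite) (hAne : A.Nonempty) (hAu : ∀ a ∈ A, H.dist u a = s) :
    ∃ a ∈ A, (H.neighborSet a ∩ A).ncard < 2 * r := by
  induction s generalizing u A with
  | zero =>
    obtain ⟨a, ha⟩ := hAne
    refine ⟨a, ha, ?_⟩
    have hu : ∀ z ∈ A, u = z := fun z hz => hG.dist_eq_zero_iff.1 (hAu z hz)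
    rw [show H.neighborSet a ∩ A = ∅ from eq_empty_of_forall_notMem fun t ⟨hat, ht⟩ =>
      H.irrefl (((hu a ha).symm.trans (hu t ht)) ▸ hat : H.Adj a a), ncard_empty]
    omega
  | succ s ih =>
    by_contra! hdeg
    set c := (H.bfsParent u)^[s]
    obtain ⟨a₀, ha₀⟩ := hAne
    set R := {z ∈ A | c z = c a₀}
    have hRA : ∀ z ∈ R, H.neighborSet z ∩ R = H.neighborSet z ∩ A := fun z hz => by
      ext t
      simp only [mem_inter_iff, mem_neighborSet, R, mem_ofPred_eq]
      exact ⟨fun h => ⟨h.1, h.2.1⟩, fun h => ⟨h.1, h.2,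
        (hH.iterate_bfsParent_eq_of_adj hG hs hA hAu hdeg hz.1 h.2 h.1).symm.trans hz.2⟩⟩
    have hRu : ∀ z ∈ R, H.dist (c a₀) z = s := fun z hz => by
      have hzu := hAu z hz.1
      have h₁ : H.dist (c z) z ≤ s := dist_iterate_bfsParent_le z (by omega)
      have h₂ : H.dist u (c z) = H.dist u z - s := dist_iterate_bfsParent z (by omega)
      have h₃ := hG.dist_triangle (u := u) (v := c z) (w := z)
      rw [← hz.2]
      omega
    obtain ⟨z, hz, hlt⟩ :=
      ih (by omega) (u := c a₀) (A := R) (hA.subset fun z hz => hz.1) ⟨a₀, ha₀, rfl⟩ hRu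
    rw [hRA z hz] at hlt
    exact (hdeg z hz.1).not_gt hlt

theorem Degenerate.exists_proper_on_finset {W : Type*} {G : SimpleGraph W} {k : ℕ}
    (hG : Degenerate G k) (B : Finset W) :
    ∃ f : W → Fin (k + 1), ∀ x ∈ B, ∀ y ∈ B, G.Adj x y → f x ≠ f y := by
  classical
  induction B using Finset.strongInduction with
  | H B ih =>
    rcases B.eq_empty_or_nonempty with rfl | hB
    · exact ⟨0, by simp⟩
    obtain ⟨z, hz, hdeg⟩ := hG B (by simpa using hB) B.finite_toSet
    obtain ⟨f, hf⟩ := ih (B.erase z) (Finset.erase_ssubset hz)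
    have hused : ((B.filter (G.Adj z)).image f).card < (Finset.univ : Finset (Fin (k + 1))).card :=
      calc _ ≤ (B.filter (G.Adj z)).card := Finset.card_image_le
        _ = (G.neighborSet z ∩ ↑B).ncard := by
          rw [← Set.ncard_coe_finset]; congr 1; ext; simp [and_comm]
        _ < _ := by simpa using Nat.lt_succ_of_le hdeg
    obtain ⟨col, -, hcol⟩ := Finset.exists_mem_notMem_of_card_lt_card hused
    have hne : ∀ t ∈ B, G.Adj z t → col ≠ f t := fun t ht h e =>
      hcol (Finset.mem_image.2 ⟨t, by simp [ht, h], e.symm⟩)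
    refine ⟨update f z col, fun x hx y hy hxy => ?_⟩
    by_cases hxz : x = z <;> by_cases hyz : y = z
    · exact absurd (hxz.trans hyz.symm) hxy.ne
    · subst hxz; simpa [hyz] using hne y hy hxy
    · subst hyz; simpa [hxz] using (hne x hx hxy.symm).symm
    · simpa [hxz, hyz] using
        hf x (Finset.mem_erase.2 ⟨hxz, hx⟩) y (Finset.mem_erase.2 ⟨hyz, hy⟩) hxy

theorem Degenerate.colorable {W : Type*} {G : SimpleGraph W} {k : ℕ} (hG : Degenerate G k) :
    G.Colorable (k + 1) :=
  nonempty_hom_of_forall_finite_subgraph_hom fun G' hfin =>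
    have hf := (hG.exists_proper_on_finset hfin.toFinset).choose_spec
    ⟨fun v => _, fun hab => hf _ (by simp) _ (by simp) (G'.adj_sub hab)⟩

theorem degenerate_induce_of_forall {V : Type*} {G : SimpleGraph V} {T : Set V} {k : ℕ}
    (h : ∀ A ⊆ T, A.Nonempty → A.Finite → ∃ v ∈ A, (G.neighborSet v ∩ A).ncard ≤ k) :
    Degenerate (G.induce T) k := fun S hS hSfin => by
  obtain ⟨_, ⟨v, hv, rfl⟩, hle⟩ :=
    h (Subtype.val '' S) (Subtype.coe_image_subset T S) (hS.image _) (hSfin.image _)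
  exact ⟨v, hv, by rwa [ncard_neighborSet_induce_inter]⟩

/-- In a `C_{2r+1}`-free graph of radius at most `r` from `v`, the subgraph
induced on each sphere of radius `s ≤ r` about `v` is `(2r-1)`-degenerate and
hence `2r`-colorable. -/
theorem sphere_induced_degenerate_and_colorable {V : Type*}
    (r : ℕ) (hr : 1 ≤ r) (H : SimpleGraph V) (hH : CFree H (2 * r + 1))
    (v : V) (hv : ∀ w : V, H.Reachable v w ∧ H.dist v w ≤ r)
    (s : ℕ) (hs : s ≤ r) :
    Degenerate (H.induce {w | H.dist v w = s}) (2 * r - 1) ∧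
      (H.induce {w | H.dist v w = s}).Colorable (2 * r) := by
  have : Nonempty V := ⟨v⟩
  have hG : H.Connected := ⟨fun x y => (hv x).1.symm.trans (hv y).1⟩
  have hdeg : Degenerate (H.induce {w | H.dist v w = s}) (2 * r - 1) :=
    degenerate_induce_of_forall fun A hAs hAne hA => by
      obtain ⟨a, ha, hlt⟩ := hH.exists_mem_ncard_neighborSet_inter_lt hG hr hs hA hAne hAs
      exact ⟨a, ha, by omega⟩
  refine ⟨hdeg, ?_⟩
  simpa [Nat.sub_add_cancel (by omega : 1 ≤ 2 * r)] using hdeg.colorable
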